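/- Let f : Q → ℝ, μ, m, δ, δ̃ ≥ 0, L > 0, y ∈ Q, c ∈ ℝ, and let ψ : E → ℝ be convex with ψ(y) = 0 and m-strongly convex relative to d on Q. Suppose: (a) μ·V[y](x) ≤ f(x) − c − ψ(x) for all x ∈ Q; (b) x⁺ ∈ Q is a δ̃-approximate minimizer of x ↦ ψ(x) + L·V[y](x) on Q; and (c) there is a value c⁺ ∈ ℝ with f(x⁺) ≤ c⁺ + δ and c⁺ ≤ c + ψ(x⁺) + L·V[y](x⁺) + δ. Then for all x ∈ Q: f(x⁺) ≤ f(x) + (L − μ)·V[y](x) − (L + m)·V[x⁺](x) + δ̃ + 2δ. -/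

import Mathlib

/-!
Let `h` be the subgradient of `ψ + L • V[y]` at `x⁺` witnessing approximate optimality.
Since `L • V[y]` is differentiable with gradient `L • (∇d x⁺ - ∇d y)` and `ψ` is convex, comparing
one-sided directional derivatives along segments of `Q` shows that `h - L • (∇d x⁺ - ∇d y)` is a
subgradient of `ψ` alone. Strong convexity of `ψ` relative to `d` at `x⁺` with this subgradient,
the three-point identity `V[y] x = V[y] x⁺ + V[x⁺] x + ⟪∇d x⁺ - ∇d y, x - x⁺⟫`, the bound
`⟪h, x - x⁺⟫ ≥ -δ̃` and the model inequalities (a), (c) then add up to the claim.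
-/

open RealInnerProductSpace Finset

/-- The Bregman divergence `V[y](x) = d(x) - d(y) - ⟪∇d(y), x - y⟫` generated by `d`
with gradient map `Dd`. -/
noncomputable def breg {E : Type*} [NormedAddCommGroup E] [InnerProductSpace ℝ E]
    (d : E → ℝ) (Dd : E → E) (y x : E) : ℝ :=
  d x - d y - ⟪Dd y, x - y⟫

/-- `g` is a subgradient of `ψ` at `z` (relative to the set `Q`). -/
def IsSubgradOn {E : Type*} [NormedAddCommGroup E] [InnerProductSpace ℝ E]
    (Q : Set E) (ψ : E → ℝ) (z g : E) : Prop :=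
  ∀ x ∈ Q, ψ z + ⟪g, x - z⟫ ≤ ψ x

/-- `ψ` is `m`-strongly convex relative to `d` on `Q`, where `V` is the Bregman
divergence generated by `d`. -/
def StrongRelConvexOn {E : Type*} [NormedAddCommGroup E] [InnerProductSpace ℝ E]
    (Q : Set E) (V : E → E → ℝ) (m : ℝ) (ψ : E → ℝ) : Prop :=
  ∀ z ∈ Q, ∀ g : E, IsSubgradOn Q ψ z g → ∀ x ∈ Q, ψ z + ⟪g, x - z⟫ + m * V z x ≤ ψ x

/-- `y` is a `δ`-approximate minimizer of `Ψ` on `Q`: there exists a subgradient `h`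
of `Ψ` at `y` such that `⟪h, x - y⟫ ≥ -δ` for all `x ∈ Q`. -/
def IsApproxMinOn {E : Type*} [NormedAddCommGroup E] [InnerProductSpace ℝ E]
    (Q : Set E) (Ψ : E → ℝ) (δ : ℝ) (y : E) : Prop :=
  y ∈ Q ∧ ∃ h : E, IsSubgradOn Q Ψ y h ∧ ∀ x ∈ Q, -δ ≤ ⟪h, x - y⟫

theorem le_of_hasDerivAt_of_forall_mul_le {φ : ℝ → ℝ} {φ' a : ℝ} (hφ : HasDerivAt φ φ' 0)
    (h : ∀ t ∈ Set.Ioc (0 : ℝ) 1, a * t ≤ φ t - φ 0) : a ≤ φ' := by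
  refine ge_of_tendsto hφ.tendsto_slope_zero_right ?_
  filter_upwards [Ioc_mem_nhdsGT (zero_lt_one' ℝ)] with t ht
  rw [zero_add, smul_eq_mul, ← div_eq_inv_mul, le_div_iff₀ ht.1]
  exact h t ht

section Bregman

variable {E : Type*} [NormedAddCommGroup E] [InnerProductSpace ℝ E]

theorem breg_three_point (d : E → ℝ) (Dd : E → E) (x y z : E) :
    breg d Dd y x = breg d Dd y z + breg d Dd z x + ⟪Dd z - Dd y, x - z⟫ := by
  have hsplit : x - y = (x - z) + (z - y) := by abel
  simp only [breg, inner_sub_left, hsplit, inner_add_right]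
  ring

variable [CompleteSpace E]

theorem HasGradientAt.const_mul {f : E → ℝ} {G x : E} (c : ℝ) (hf : HasGradientAt f G x) :
    HasGradientAt (fun x => c * f x) (c • G) x := by
  rw [hasGradientAt_iff_hasFDerivAt] at hf ⊢
  simpa using hf.const_mul c

theorem hasGradientAt_breg {d : E → ℝ} {Dd : E → E} {x : E} (hd : HasGradientAt d (Dd x) x)
    (y : E) : HasGradientAt (breg d Dd y) (Dd x - Dd y) x := by
  rw [hasGradientAt_iff_hasFDerivAt] at hd ⊢
  have hlin := ((innerSL ℝ (Dd y)).hasFDerivAt (x := x)).sub_const ⟪Dd y, y⟫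
  have hbreg : breg d Dd y = fun z => d z - d y - (innerSL ℝ (Dd y) z - ⟪Dd y, y⟫) := by
    funext z
    simp [breg, inner_sub_right]
  rw [hbreg]
  refine ((hd.sub_const (d y)).sub hlin).congr_fderiv ?_
  ext v
  simp

theorem IsSubgradOn.sub_of_hasGradientAt {Q : Set E} (hQ : Convex ℝ Q) {ψ g : E → ℝ}
    (hψ : ConvexOn ℝ Q ψ) {z G h : E} (hz : z ∈ Q) (hg : HasGradientAt g G z)
    (hsub : IsSubgradOn Q (fun x => ψ x + g x) z h) : IsSubgradOn Q ψ z (h - G) := by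
  intro x hx
  set v := x - z
  have hline : HasDerivAt (fun t : ℝ => g (z + t • v)) ⟪G, v⟫ 0 :=
    (hasGradientAt_iff_hasFDerivAt.mp hg).hasLineDerivAt v
  have hslope : ⟪h, v⟫ - (ψ x - ψ z) ≤ ⟪G, v⟫ := by
    refine le_of_hasDerivAt_of_forall_mul_le hline fun t ⟨ht0, _⟩ => ?_
    have hseg : (1 - t) • z + t • x = z + t • v := by
      simp only [v, smul_sub, sub_smul, one_smul]
      abel
    have hmem : z + t • v ∈ Q := hseg ▸ hQ hz hx (by linarith) ht0.le (by ring)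
    have hconv : ψ (z + t • v) ≤ (1 - t) * ψ z + t * ψ x :=
      hseg ▸ hψ.2 hz hx (by linarith) ht0.le (by ring)
    have hsg := hsub _ hmem
    simp only [add_sub_cancel_left, real_inner_smul_right, zero_smul, add_zero] at hsg ⊢
    linear_combination hsg + hconv
  rw [inner_sub_left]
  linarith

end Bregman

theorem stmt2_general
    {E : Type*} [NormedAddCommGroup E] [InnerProductSpace ℝ E] [FiniteDimensional ℝ E]
    (Q : Set E) (hQ : Convex ℝ Q)
    (d : E → ℝ) (Dd : E → E)
    (hd_diff : ∀ x, HasGradientAt d (Dd x) x)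
    (f : E → ℝ) (μ m δ δt L : ℝ)
    (y : E) (c : ℝ)
    (ψ : E → ℝ) (hψ_conv : ConvexOn ℝ Q ψ)
    (hψ_strong : StrongRelConvexOn Q (breg d Dd) m ψ)
    (ha : ∀ x ∈ Q, μ * breg d Dd y x ≤ f x - c - ψ x)
    (xp : E) (hxp : IsApproxMinOn Q (fun x => ψ x + L * breg d Dd y x) δt xp)
    (hc : ∃ cp : ℝ, f xp ≤ cp + δ ∧ cp ≤ c + ψ xp + L * breg d Dd y xp + δ) :
    ∀ x ∈ Q,
      f xp ≤ f x + (L - μ) * breg d Dd y x - (L + m) * breg d Dd xp x + δt + 2 * δ := by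
  intro x hx
  obtain ⟨hxpQ, h, hsub, happrox⟩ := hxp
  obtain ⟨cp, hcp_upper, hcp_model⟩ := hc
  have hsub_ψ : IsSubgradOn Q ψ xp (h - L • (Dd xp - Dd y)) :=
    hsub.sub_of_hasGradientAt hQ hψ_conv hxpQ ((hasGradientAt_breg (hd_diff xp) y).const_mul L)
  have hstrong := hψ_strong xp hxpQ _ hsub_ψ x hx
  rw [inner_sub_left, real_inner_smul_left] at hstrong
  linear_combination hcp_upper + hcp_model + hstrong + happrox x hx + ha x hx -
    L * breg_three_point d Dd x y xp

/-- per-iteration inequality of the adaptive gradient method with an inexact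
`(δ, L, μ, m, V)`-model. -/
theorem stmt2
    {E : Type*} [NormedAddCommGroup E] [InnerProductSpace ℝ E] [FiniteDimensional ℝ E]
    (Q : Set E) (hQ : Convex ℝ Q)
    (d : E → ℝ) (Dd : E → E)
    (hd_conv : ConvexOn ℝ Set.univ d) (hd_diff : ∀ x, HasGradientAt d (Dd x) x)
    (f : E → ℝ) (μ m δ δt L : ℝ)
    (hμ : 0 ≤ μ) (hm : 0 ≤ m) (hδ : 0 ≤ δ) (hδt : 0 ≤ δt) (hL : 0 < L)
    (y : E) (hy : y ∈ Q) (c : ℝ)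
    (ψ : E → ℝ) (hψ_conv : ConvexOn ℝ Q ψ) (hψ0 : ψ y = 0)
    (hψ_strong : StrongRelConvexOn Q (breg d Dd) m ψ)
    (ha : ∀ x ∈ Q, μ * breg d Dd y x ≤ f x - c - ψ x)
    (xp : E) (hxp : IsApproxMinOn Q (fun x => ψ x + L * breg d Dd y x) δt xp)
    (hc : ∃ cp : ℝ, f xp ≤ cp + δ ∧ cp ≤ c + ψ xp + L * breg d Dd y xp + δ) :
    ∀ x ∈ Q,
      f xp ≤ f x + (L - μ) * breg d Dd y x - (L + m) * breg d Dd xp x + δt + 2 * δ :=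
  stmt2_general Q hQ d Dd hd_diff f μ m δ δt L y c ψ hψ_conv hψ_strong ha xp hxp hc
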